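/- Let 1 ≤ p < ∞, 0 < q, r < ∞, let u, v be weights on (a,b), let N ∈ ℤ, and let {x_k}_{k=N}^∞ be a strictly increasing sequence in [a,b]. For each k ≥ N+1, let B(x_{k-1},x_k) denote the best constant in the local weighted Hardy inequality, i.e. B(x_{k-1},x_k) = sup over nonnegative measurable h on (x_{k-1},x_k) of (∫_{x_{k-1}}^{x_k} (∫_{x_{k-1}}^t h(s)ds)^q u(t)dt)^{1/q} / (∫_{x_{k-1}}^{x_k} h^p v)^{1/p}. Then there exists a finite positive constant C′ such that (Σ_{k=N+1}^∞ 2^{-k} (∫_{x_{k-1}}^{x_k} (∫_{x_{k-1}}^t f)^q u(t)dt)^{r/q})^{1/r} ≤ C′ (Σ_{k=N+1}^∞ ∫_{x_{k-1}}^{x_k} f^p v)^{1/p} holds for all nonnegative measurable f on (a,b) if and only if there exists a finite positive constant C such that (Σ_{k=N+1}^∞ 2^{-k} a_k^r B(x_{k-1},x_k)^r)^{1/r} ≤ C (Σ_{k=N+1}^∞ a_k^p)^{1/p} holds for every sequence of nonnegative numbers {a_k}_{k=N+1}^∞. Moreover, the least such constants are two-sidedly comparable with comparison constants depending only on p, q,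 r. -/

import Mathlib

/-!
Both inequalities have exactly the same admissible constants. Write `H_k(f)` for the local Hardy
functional `∫_{x_{k-1}}^{x_k} (∫_{x_{k-1}}^t f)^q u(t) dt` and `L_k(f) = ∫_{x_{k-1}}^{x_k} f^p v`.
By the definition of `B`, `H_k(f)^{1/q} ≤ B(x_{k-1}, x_k) L_k(f)^{1/p}` (for `L_k(f) = ∞` after
truncating `f` and passing to the limit by monotone convergence), so the sequence inequality
applied to `a_k = L_k(f)^{1/p}` yields the function inequality. Conversely, given `a_k`, take for
each `k` a test function for `B(x_{k-1}, x_k)`, rescaled so that `L_k = a_k^p`; these live on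
disjoint blocks, so their sum is a single test function for the function inequality, and it
bounds every finite partial sum of the sequence side.
-/

open MeasureTheory ENNReal NNReal Set

noncomputable section

/-- The open interval `(a, b)` of real numbers, with extended-real endpoints. -/
def Iab (a b : EReal) : Set ℝ := {x : ℝ | a < (x : EReal) ∧ (x : EReal) < b}

/-- `𝒲(x) = ∫_x^b w(s) ds`. -/
def Wf (w : ℝ → ℝ≥0∞) (b : EReal) (x : EReal) : ℝ≥0∞ := ∫⁻ s in Iab x b, w s

/-- `V_p(x, y)`: for `p > 1` it is `(∫_x^y v^{-1/(p-1)})^{(p-1)/p}`, and for `p = 1` it is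
`ess sup_{s ∈ (x,y)} v(s)⁻¹`. -/
def Vp (v : ℝ → ℝ≥0∞) (p : ℝ) (x y : EReal) : ℝ≥0∞ :=
  if p = 1 then essSup (fun s => (v s)⁻¹) (volume.restrict (Iab x y))
  else (∫⁻ s in Iab x y, v s ^ (-(1 : ℝ) / (p - 1))) ^ ((p - 1) / p)

/-- Left-hand side of the iterated Hardy inequality. -/
def lhsIter (a b : EReal) (u w : ℝ → ℝ≥0∞) (q r : ℝ) (f : ℝ → ℝ≥0∞) : ℝ≥0∞ :=
  (∫⁻ x in Iab a b,
      (∫⁻ t in Iab a (x : EReal),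
          (∫⁻ s in Iab a (t : EReal), f s) ^ q * u t) ^ (r / q) * w x) ^ (1 / r)

/-- Right-hand side `(∫_a^b f^p v)^{1/p}`. -/
def rhsLp (a b : EReal) (v : ℝ → ℝ≥0∞) (p : ℝ) (f : ℝ → ℝ≥0∞) : ℝ≥0∞ :=
  (∫⁻ x in Iab a b, f x ^ p * v x) ^ (1 / p)

/-- The iterated Hardy inequality with constant `C` holds for all nonnegative measurable `f`. -/
def MainIneq (a b : EReal) (u v w : ℝ → ℝ≥0∞) (p q r : ℝ) (C : ℝ≥0∞) : Prop :=
  ∀ f : ℝ → ℝ≥0∞, Measurable f → lhsIter a b u w q r f ≤ C * rhsLp a b v p f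

/-- The discretized right-hand side `(Σ_{k>N} ∫_{x_{k-1}}^{x_k} f^p v)^{1/p}`. -/
def DiscRHS (v : ℝ → ℝ≥0∞) (p : ℝ) (N : ℤ) (x : ℤ → EReal) (f : ℝ → ℝ≥0∞) : ℝ≥0∞ :=
  (∑' k : {k : ℤ // N < k}, ∫⁻ s in Iab (x (k.1 - 1)) (x k.1), f s ^ p * v s) ^ (1 / p)

/-- The first discretized inequality, with constant `C`. -/
def Disc1 (u v : ℝ → ℝ≥0∞) (p q r : ℝ) (N : ℤ) (x : ℤ → EReal) (C : ℝ≥0∞) : Prop :=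
  ∀ f : ℝ → ℝ≥0∞, Measurable f →
    (∑' k : {k : ℤ // N < k}, (2 : ℝ≥0∞) ^ (-(k.1 : ℝ)) *
        (∫⁻ t in Iab (x (k.1 - 1)) (x k.1),
            (∫⁻ s in Iab (x (k.1 - 1)) (t : EReal), f s) ^ q * u t) ^ (r / q)) ^ (1 / r)
      ≤ C * DiscRHS v p N x f

/-- The second discretized inequality, with constant `C`. -/
def Disc2 (a : EReal) (u v : ℝ → ℝ≥0∞) (p q r : ℝ) (N : ℤ) (x : ℤ → EReal) (C : ℝ≥0∞) : Prop :=
  ∀ f : ℝ → ℝ≥0∞, Measurable f →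
    (∑' k : {k : ℤ // N < k}, (2 : ℝ≥0∞) ^ (-(k.1 : ℝ)) *
        (∫⁻ s in Iab a (x k.1), f s) ^ r *
        (∫⁻ s in Iab (x k.1) (x (k.1 + 1)), u s) ^ (r / q)) ^ (1 / r)
      ≤ C * DiscRHS v p N x f

/-- `B(c, d)`: the best constant of the local weighted Hardy inequality on `(c, d)`. -/
def Bconst (u v : ℝ → ℝ≥0∞) (p q : ℝ) (c d : EReal) : ℝ≥0∞ :=
  ⨆ (h : ℝ → ℝ≥0∞) (_ : Measurable h),
    (∫⁻ t in Iab c d, (∫⁻ s in Iab c (t : EReal), h s) ^ q * u t) ^ (1 / q) /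
      (∫⁻ t in Iab c d, h t ^ p * v t) ^ (1 / p)

/-- The discrete inequality featuring the local best constants `B(x_{k-1}, x_k)`. -/
def SeqB (u v : ℝ → ℝ≥0∞) (p q r : ℝ) (N : ℤ) (x : ℤ → EReal) (C : ℝ≥0∞) : Prop :=
  ∀ aa : ℤ → ℝ≥0,
    (∑' k : {k : ℤ // N < k}, (2 : ℝ≥0∞) ^ (-(k.1 : ℝ)) *
        (aa k.1 : ℝ≥0∞) ^ r * Bconst u v p q (x (k.1 - 1)) (x k.1) ^ r) ^ (1 / r)
      ≤ C * (∑' k : {k : ℤ // N < k}, (aa k.1 : ℝ≥0∞) ^ p) ^ (1 / p)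

/-- The discrete inequality featuring the quantities `V_p(x_{j-1}, x_j)`. -/
def SeqV (u v : ℝ → ℝ≥0∞) (p q r : ℝ) (N : ℤ) (x : ℤ → EReal) (C : ℝ≥0∞) : Prop :=
  ∀ aa : ℤ → ℝ≥0,
    (∑' k : {k : ℤ // N < k}, (2 : ℝ≥0∞) ^ (-(k.1 : ℝ)) *
        (∫⁻ s in Iab (x k.1) (x (k.1 + 1)), u s) ^ (r / q) *
        (∑ j ∈ Finset.Icc (N + 1) k.1, (aa j : ℝ≥0∞) * Vp v p (x (j - 1)) (x j)) ^ r) ^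
      (1 / r)
      ≤ C * (∑' k : {k : ℤ // N < k}, (aa k.1 : ℝ≥0∞) ^ p) ^ (1 / p)

open Function

lemma measurableSet_Iab (a b : EReal) : MeasurableSet (Iab a b) :=
  (measurableSet_lt measurable_const measurable_coe_real_ereal).inter
    (measurableSet_lt measurable_coe_real_ereal measurable_const)

lemma Iab_subset_Iab {a a' b b' : EReal} (ha : a' ≤ a) (hb : b ≤ b') : Iab a b ⊆ Iab a' b' :=
  fun _ hx => ⟨ha.trans_lt hx.1, hx.2.trans_le hb⟩

lemma measurable_setLIntegral_Iab (c : EReal) (f : ℝ → ℝ≥0∞) :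
    Measurable fun t : ℝ => ∫⁻ s in Iab c t, f s :=
  Monotone.measurable fun _ _ h =>
    lintegral_mono_set (Iab_subset_Iab le_rfl (EReal.coe_le_coe_iff.2 h))

lemma ENNReal.iSup_rpow {ι : Sort*} (f : ι → ℝ≥0∞) {y : ℝ} (hy : 0 < y) :
    (⨆ i, f i) ^ y = ⨆ i, f i ^ y :=
  (ENNReal.orderIsoRpow y hy).map_iSup f

lemma ENNReal.finsetSum_iSup_le {ι : Type*} {κ : ι → Type*} [∀ i, Nonempty (κ i)]
    {s : Finset ι} {φ : ∀ i, κ i → ℝ≥0∞} {B : ℝ≥0∞}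
    (h : ∀ H : ∀ i, κ i, ∑ i ∈ s, φ i (H i) ≤ B) : ∑ i ∈ s, ⨆ j, φ i j ≤ B := by
  classical
  calc ∑ i ∈ s, ⨆ j, φ i j = ∑ i ∈ s, ⨆ H : (∀ i, κ i), φ i (H i) := by
        simp only [(surjective_eval _).iSup_comp]
    _ = ⨆ H : (∀ i, κ i), ∑ i ∈ s, φ i (H i) := by
        refine ENNReal.finsetSum_iSup fun H₁ H₂ =>
          ⟨fun i => if φ i (H₁ i) ≤ φ i (H₂ i) then H₂ i else H₁ i, fun i => ?_⟩
        dsimp only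
        split_ifs with h <;> simp [h, le_of_not_ge]
    _ ≤ B := iSup_le h

lemma sum_indicator_apply_of_pairwise_disjoint {ι α M : Type*} [AddCommMonoid M]
    [DecidableEq ι] {I : ι → Set α} (hI : Pairwise (Disjoint on I)) (K : Finset ι)
    (g : ι → α → M) {j : ι} {s : α} (hs : s ∈ I j) :
    ∑ k ∈ K, (I k).indicator (g k) s = if j ∈ K then g j s else 0 := by
  rw [← Finset.sum_ite_eq' K j (fun k => g k s)]
  refine Finset.sum_congr rfl fun k _ => ?_
  split_ifs with hk
  · rw [hk, indicator_of_mem hs]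
  · exact indicator_of_notMem (Set.disjoint_left.1 (hI (Ne.symm hk)) hs) _

section Truncation

variable {v f : ℝ → ℝ≥0∞}

def truncate (v f : ℝ → ℝ≥0∞) (n : ℕ) (s : ℝ) : ℝ≥0∞ :=
  if v s ≤ n ∧ |s| ≤ n then min (f s) n else 0

lemma measurable_truncate (hv : Measurable v) (hf : Measurable f) (n : ℕ) :
    Measurable (truncate v f n) :=
  Measurable.ite ((measurableSet_le hv measurable_const).inter
      (measurableSet_le continuous_abs.measurable measurable_const))
    (hf.min measurable_const) measurable_const

lemma monotone_truncate : Monotone (truncate v f) := by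
  intro n m hnm s
  have hnm' : (n : ℝ≥0∞) ≤ m := by exact_mod_cast hnm
  by_cases hs : v s ≤ n ∧ |s| ≤ n
  · have hs' : v s ≤ m ∧ |s| ≤ m := ⟨hs.1.trans hnm', hs.2.trans (by exact_mod_cast hnm)⟩
    rw [truncate, truncate, if_pos hs, if_pos hs']
    exact min_le_min_left _ hnm'
  · rw [truncate, if_neg hs]
    exact zero_le

lemma truncate_le (n : ℕ) (s : ℝ) : truncate v f n s ≤ f s := by
  unfold truncate
  split_ifs
  exacts [min_le_left _ _, zero_le]

lemma iSup_truncate {s : ℝ} (hvs : v s ≠ ∞) : ⨆ n, truncate v f n s = f s := by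
  refine le_antisymm (iSup_le fun n => truncate_le n s) ?_
  obtain ⟨n₁, hn₁⟩ := ENNReal.exists_nat_gt hvs
  obtain ⟨n₂, hn₂⟩ := exists_nat_ge |s|
  calc f s = ⨆ m : ℕ, min (f s) m := by
        rw [← inf_iSup_eq, ENNReal.iSup_natCast, inf_top_eq]
    _ ≤ ⨆ n, truncate v f n s := iSup_le fun m => by
        let n := max m (max n₁ n₂)
        have hs : v s ≤ n ∧ |s| ≤ n :=
          ⟨hn₁.le.trans (by simp [n]), hn₂.trans (by simp [n])⟩
        refine le_iSup_of_le n ?_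
        rw [truncate, if_pos hs]
        exact min_le_min_left _ (by simp [n])

end Truncation

section LocalHardy

variable {u v : ℝ → ℝ≥0∞} {p q : ℝ} {c d : EReal} {f g : ℝ → ℝ≥0∞}

def hardyIntegral (u : ℝ → ℝ≥0∞) (q : ℝ) (c d : EReal) (f : ℝ → ℝ≥0∞) : ℝ≥0∞ :=
  ∫⁻ t in Iab c d, (∫⁻ s in Iab c (t : EReal), f s) ^ q * u t

def weightedLpIntegral (v : ℝ → ℝ≥0∞) (p : ℝ) (c d : EReal) (f : ℝ → ℝ≥0∞) : ℝ≥0∞ :=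
  ∫⁻ t in Iab c d, f t ^ p * v t

lemma Bconst_eq_iSup : Bconst u v p q c d = ⨆ (h : ℝ → ℝ≥0∞) (_ : Measurable h),
    hardyIntegral u q c d h ^ (1 / q) / weightedLpIntegral v p c d h ^ (1 / p) := rfl

lemma hardyIntegral_congr (h : EqOn f g (Iab c d)) :
    hardyIntegral u q c d f = hardyIntegral u q c d g :=
  setLIntegral_congr_fun (measurableSet_Iab c d) fun t ht => by
    rw [setLIntegral_congr_fun (measurableSet_Iab c t)
      fun s hs => h (Iab_subset_Iab le_rfl ht.2.le hs)]

lemma weightedLpIntegral_congr (h : EqOn f g (Iab c d)) :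
    weightedLpIntegral v p c d f = weightedLpIntegral v p c d g :=
  setLIntegral_congr_fun (measurableSet_Iab c d) fun t ht => by rw [h ht]

lemma weightedLpIntegral_zero (hp : 0 < p) : weightedLpIntegral v p c d 0 = 0 := by
  simp [weightedLpIntegral, zero_rpow_of_pos hp]

lemma hardyIntegral_const_mul {a : ℝ≥0∞} (ha : a ≠ ∞) (hq : 0 ≤ q) :
    hardyIntegral u q c d (fun s => a * f s) = a ^ q * hardyIntegral u q c d f := by
  simp only [hardyIntegral, lintegral_const_mul' _ _ ha, mul_rpow_of_nonneg _ _ hq, mul_assoc]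
  exact lintegral_const_mul' _ _ (rpow_ne_top_of_nonneg hq ha)

lemma weightedLpIntegral_const_mul {a : ℝ≥0∞} (ha : a ≠ ∞) (hp : 0 ≤ p) :
    weightedLpIntegral v p c d (fun s => a * f s) = a ^ p * weightedLpIntegral v p c d f := by
  simp only [weightedLpIntegral, mul_rpow_of_nonneg _ _ hp, mul_assoc]
  exact lintegral_const_mul' _ _ (rpow_ne_top_of_nonneg hp ha)

lemma hardyIntegral_eq_zero_of_weightedLpIntegral_eq_zero (hp : 0 < p) (hq : 0 < q)
    (hvm : Measurable v) (hv : ∀ s ∈ Iab c d, v s ≠ 0) (hf : Measurable f)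
    (h0 : weightedLpIntegral v p c d f = 0) : hardyIntegral u q c d f = 0 := by
  have hf0 : ∀ᵐ s ∂volume.restrict (Iab c d), f s = 0 := by
    filter_upwards [(lintegral_eq_zero_iff ((hf.pow_const p).mul hvm)).1 h0,
      ae_restrict_mem (measurableSet_Iab c d)] with s hs hsI
    simpa [rpow_eq_zero_iff_of_pos hp, hv s hsI] using hs
  refine (setLIntegral_congr_fun (g := 0) (measurableSet_Iab c d) fun t ht => ?_).trans
    lintegral_zero
  have : ∫⁻ s in Iab c t, f s = 0 := lintegral_eq_zero_of_ae_eq_zero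
    (ae_restrict_of_ae_restrict_of_subset (Iab_subset_Iab le_rfl ht.2.le) hf0)
  simp [this, zero_rpow_of_pos hq]

lemma hardyIntegral_iSup (hq : 0 < q) (hu : Measurable u) {g : ℕ → ℝ → ℝ≥0∞}
    (hg : ∀ n, Measurable (g n)) (hmono : Monotone g) (hf : ∀ s ∈ Iab c d, ⨆ n, g n s = f s) :
    hardyIntegral u q c d f = ⨆ n, hardyIntegral u q c d (g n) := by
  have hinner : ∀ t ∈ Iab c d, ∫⁻ s in Iab c t, f s = ⨆ n, ∫⁻ s in Iab c t, g n s :=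
    fun t ht => by
      rw [← lintegral_iSup hg hmono]
      exact setLIntegral_congr_fun (measurableSet_Iab c t)
        fun s hs => (hf s (Iab_subset_Iab le_rfl ht.2.le hs)).symm
  refine (setLIntegral_congr_fun (measurableSet_Iab c d) fun t ht => ?_).trans
    (lintegral_iSup (fun n => ((measurable_setLIntegral_Iab c _).pow_const q).mul hu)
      fun n m hnm t => by gcongr; exact hmono hnm _)
  rw [hinner t ht, ENNReal.iSup_rpow _ hq, ENNReal.iSup_mul]

lemma weightedLpIntegral_truncate_ne_top (hp : 0 < p) (n : ℕ) :
    weightedLpIntegral v p c d (truncate v f n) ≠ ∞ := by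
  have hbound : ∀ t, truncate v f n t ^ p * v t ≤
      (Icc (-(n : ℝ)) n).indicator (fun _ => (n : ℝ≥0∞) ^ p * n) t := by
    intro t
    by_cases ht : v t ≤ n ∧ |t| ≤ n
    · rw [truncate, if_pos ht, indicator_of_mem (mem_Icc.2 (abs_le.1 ht.2))]
      gcongr
      · exact min_le_right _ _
      · exact ht.1
    · simp [truncate, if_neg ht, zero_rpow_of_pos hp]
  refine ne_top_of_le_ne_top ?_ ((setLIntegral_le_lintegral _ _).trans (lintegral_mono hbound))
  rw [lintegral_indicator_const measurableSet_Icc]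
  exact mul_ne_top (mul_ne_top (rpow_ne_top_of_nonneg hp.le (by simp)) (by simp))
    measure_Icc_lt_top.ne

lemma hardyIntegral_rpow_le_of_weightedLpIntegral_ne_top (hp : 0 < p) (hq : 0 < q)
    (hvm : Measurable v) (hv : ∀ s ∈ Iab c d, v s ≠ 0) (hf : Measurable f)
    (hfin : weightedLpIntegral v p c d f ≠ ∞) :
    hardyIntegral u q c d f ^ (1 / q) ≤
      Bconst u v p q c d * weightedLpIntegral v p c d f ^ (1 / p) := by
  rcases eq_or_ne (weightedLpIntegral v p c d f) 0 with h0 | h0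
  · rw [hardyIntegral_eq_zero_of_weightedLpIntegral_eq_zero hp hq hvm hv hf h0,
      zero_rpow_of_pos (by positivity)]
    exact zero_le
  · refine (ENNReal.div_le_iff (by simp [h0, hp.le]) (by simp [hfin, hp.le])).1 ?_
    rw [Bconst_eq_iSup]
    exact le_iSup₂ (f := fun h (_ : Measurable h) =>
      hardyIntegral u q c d h ^ (1 / q) / weightedLpIntegral v p c d h ^ (1 / p)) f hf

lemma hardyIntegral_rpow_le_Bconst_mul (hp : 0 < p) (hq : 0 < q) (hu : Measurable u)
    (hvm : Measurable v) (hv : ∀ s ∈ Iab c d, 0 < v s ∧ v s < ∞) (hf : Measurable f) :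
    hardyIntegral u q c d f ^ (1 / q) ≤
      Bconst u v p q c d * weightedLpIntegral v p c d f ^ (1 / p) := by
  rw [hardyIntegral_iSup hq hu (measurable_truncate hvm hf) monotone_truncate
      fun s hs => iSup_truncate (hv s hs).2.ne, ENNReal.iSup_rpow _ (one_div_pos.2 hq)]
  refine iSup_le fun n => ?_
  calc hardyIntegral u q c d (truncate v f n) ^ (1 / q)
      ≤ Bconst u v p q c d * weightedLpIntegral v p c d (truncate v f n) ^ (1 / p) :=
        hardyIntegral_rpow_le_of_weightedLpIntegral_ne_top hp hq hvm
          (fun s hs => (hv s hs).1.ne') (measurable_truncate hvm hf n)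
          (weightedLpIntegral_truncate_ne_top hp n)
    _ ≤ Bconst u v p q c d * weightedLpIntegral v p c d f ^ (1 / p) := by
        unfold weightedLpIntegral
        gcongr with t
        exact truncate_le n t

lemma mul_Bconst_le_iSup (hp : 0 < p) (hq : 0 < q) (hvm : Measurable v)
    (hv : ∀ s ∈ Iab c d, v s ≠ 0) {α : ℝ≥0∞} (hα : α ≠ ∞) :
    α * Bconst u v p q c d ≤
      ⨆ g : {g : ℝ → ℝ≥0∞ // Measurable g ∧ weightedLpIntegral v p c d g ≤ α ^ p},
        hardyIntegral u q c d g.1 ^ (1 / q) := by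
  rw [Bconst_eq_iSup, ENNReal.mul_iSup]
  refine iSup_le fun h => ?_
  rw [ENNReal.mul_iSup]
  refine iSup_le fun hh => ?_
  set D := weightedLpIntegral v p c d h
  rcases eq_or_ne D 0 with hD0 | hD0
  · rw [hardyIntegral_eq_zero_of_weightedLpIntegral_eq_zero hp hq hvm hv hh hD0,
      zero_rpow_of_pos (one_div_pos.2 hq), ENNReal.zero_div, mul_zero]
    exact zero_le
  rcases eq_or_ne D ∞ with hDt | hDt
  · rw [hDt, top_rpow_of_pos (one_div_pos.2 hp), ENNReal.div_top, mul_zero]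
    exact zero_le
  have hDp : D ^ (1 / p) ≠ 0 := by simp [hD0, hp.le]
  set a := α / D ^ (1 / p)
  have ha : a ≠ ∞ := div_ne_top hα hDp
  refine le_iSup_of_le ⟨fun s => a * h s, hh.const_mul a, le_of_eq ?_⟩ (le_of_eq ?_)
  · rw [weightedLpIntegral_const_mul ha hp.le, div_rpow_of_nonneg _ _ hp.le, ← ENNReal.rpow_mul,
      one_div_mul_cancel hp.ne', ENNReal.rpow_one, ENNReal.div_mul_cancel hD0 hDt]
  · rw [hardyIntegral_const_mul ha hq.le, mul_rpow_of_nonneg _ _ (one_div_pos.2 hq).le,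
      ← ENNReal.rpow_mul, mul_one_div_cancel hq.ne', ENNReal.rpow_one]
    simp only [a, div_eq_mul_inv]
    ring

end LocalHardy

section Blocks

variable {u v : ℝ → ℝ≥0∞} {p q r : ℝ} {N : ℤ} {x : ℤ → EReal} {C : ℝ≥0∞}

lemma disc1_iff : Disc1 u v p q r N x C ↔ ∀ f : ℝ → ℝ≥0∞, Measurable f →
    (∑' k : {k : ℤ // N < k}, (2 : ℝ≥0∞) ^ (-(k.1 : ℝ)) *
        hardyIntegral u q (x (k.1 - 1)) (x k.1) f ^ (r / q)) ^ (1 / r)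
      ≤ C * (∑' k : {k : ℤ // N < k}, weightedLpIntegral v p (x (k.1 - 1)) (x k.1) f) ^ (1 / p) :=
  Iff.rfl

lemma pairwise_disjoint_Iab (hx : ∀ k, N ≤ k → x k ≤ x (k + 1)) :
    Pairwise (Disjoint on fun k : {k : ℤ // N < k} => Iab (x (k.1 - 1)) (x k.1)) := by
  have hmono : MonotoneOn x (Ici N) :=
    monotoneOn_of_le_succ ordConnected_Ici fun k _ hk _ => by
      simpa [Order.succ_eq_add_one] using hx k hk
  have key : ∀ j k : {k : ℤ // N < k}, j.1 < k.1 →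
      Disjoint (Iab (x (j.1 - 1)) (x j.1)) (Iab (x (k.1 - 1)) (x k.1)) :=
    fun j k hjk => Set.disjoint_left.2 fun s hj hk =>
      lt_irrefl (s : EReal) ((hj.2.trans_le (hmono (mem_Ici.2 (by omega))
        (mem_Ici.2 (by omega)) (by omega))).trans hk.1)
  intro j k hjk
  rcases lt_or_gt_of_ne (Subtype.coe_injective.ne hjk) with h | h
  exacts [key j k h, (key k j h).symm]

lemma Bconst_eq_zero_of_seqB_zero (hr : 0 < r) (hC : SeqB u v p q r N x 0)
    (k : {k : ℤ // N < k}) : Bconst u v p q (x (k.1 - 1)) (x k.1) = 0 := by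
  have h := hC (Pi.single k.1 1)
  rw [zero_mul, nonpos_iff_eq_zero, rpow_eq_zero_iff_of_pos (one_div_pos.2 hr),
    ENNReal.tsum_eq_zero] at h
  simpa [hr, not_lt.2 hr.le, (ENNReal.rpow_pos two_pos ofNat_ne_top).ne'] using h k

lemma SeqB.le_ennreal (hp : 0 < p) (hr : 0 < r) (hC : SeqB u v p q r N x C)
    (α : ℤ → ℝ≥0∞) :
    (∑' k : {k : ℤ // N < k}, (2 : ℝ≥0∞) ^ (-(k.1 : ℝ)) * α k.1 ^ r *
        Bconst u v p q (x (k.1 - 1)) (x k.1) ^ r) ^ (1 / r)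
      ≤ C * (∑' k : {k : ℤ // N < k}, α k.1 ^ p) ^ (1 / p) := by
  by_cases hfin : ∀ k : {k : ℤ // N < k}, α k.1 ≠ ∞
  · simpa only [fun k => coe_toNNReal (hfin k)] using hC fun k => (α k).toNNReal
  push Not at hfin
  obtain ⟨j, hj⟩ := hfin
  rcases eq_or_ne C 0 with rfl | hC0
  · simp [Bconst_eq_zero_of_seqB_zero hr hC, zero_rpow_of_pos hr, hr]
  · have htop : ∑' k : {k : ℤ // N < k}, α k.1 ^ p = ∞ :=
      ENNReal.tsum_eq_top_of_eq_top ⟨j, by simp [hj, hp]⟩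
    rw [htop, top_rpow_of_pos (one_div_pos.2 hp), mul_top hC0]
    exact le_top

lemma disc1_of_seqB (hp : 0 < p) (hq : 0 < q) (hr : 0 < r) (hu : Measurable u)
    (hvm : Measurable v) (hv : ∀ k, N < k → ∀ s ∈ Iab (x (k - 1)) (x k), 0 < v s ∧ v s < ∞)
    (hC : SeqB u v p q r N x C) : Disc1 u v p q r N x C := by
  rw [disc1_iff]
  intro f hf
  set L : ℤ → ℝ≥0∞ := fun k => weightedLpIntegral v p (x (k - 1)) (x k) f
  have hlocal : ∀ k : {k : ℤ // N < k}, hardyIntegral u q (x (k.1 - 1)) (x k.1) f ^ (r / q) ≤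
      (L k ^ (1 / p)) ^ r * Bconst u v p q (x (k.1 - 1)) (x k.1) ^ r := by
    intro k
    rw [← mul_rpow_of_nonneg _ _ hr.le, mul_comm, div_eq_mul_one_div r q, mul_comm r,
      ENNReal.rpow_mul]
    gcongr
    exact hardyIntegral_rpow_le_Bconst_mul hp hq hu hvm (hv k.1 k.2) hf
  calc _ ≤ (∑' k : {k : ℤ // N < k}, (2 : ℝ≥0∞) ^ (-(k.1 : ℝ)) * (L k ^ (1 / p)) ^ r *
          Bconst u v p q (x (k.1 - 1)) (x k.1) ^ r) ^ (1 / r) := by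
        refine rpow_le_rpow (ENNReal.tsum_le_tsum fun k => ?_) (one_div_pos.2 hr).le
        rw [mul_assoc]
        exact mul_le_mul_right (hlocal k) _
    _ ≤ C * (∑' k : {k : ℤ // N < k}, (L k ^ (1 / p)) ^ p) ^ (1 / p) :=
        hC.le_ennreal hp hr fun k => L k ^ (1 / p)
    _ = C * (∑' k : {k : ℤ // N < k}, L k) ^ (1 / p) := by
        simp only [← ENNReal.rpow_mul, one_div_mul_cancel hp.ne', ENNReal.rpow_one]

lemma sum_hardyIntegral_le_of_disc1 (hp : 0 < p) (hr : 0 < r)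
    (hx : ∀ k, N ≤ k → x k ≤ x (k + 1)) (hC : Disc1 u v p q r N x C) (α : ℤ → ℝ≥0∞)
    (K : Finset {k : ℤ // N < k}) (g : {k : ℤ // N < k} → ℝ → ℝ≥0∞)
    (hg : ∀ k, Measurable (g k))
    (hgα : ∀ k, weightedLpIntegral v p (x (k.1 - 1)) (x k.1) (g k) ≤ α k.1 ^ p) :
    ∑ k ∈ K, (2 : ℝ≥0∞) ^ (-(k.1 : ℝ)) * hardyIntegral u q (x (k.1 - 1)) (x k.1) (g k) ^ (r / q)
      ≤ (C * (∑' k : {k : ℤ // N < k}, α k.1 ^ p) ^ (1 / p)) ^ r := by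
  classical
  set f : ℝ → ℝ≥0∞ := fun s => ∑ k ∈ K, (Iab (x (k.1 - 1)) (x k.1)).indicator (g k) s
  have hf : Measurable f :=
    Finset.measurable_sum K fun k _ => (hg k).indicator (measurableSet_Iab _ _)
  have hfI : ∀ k, EqOn f (if k ∈ K then g k else 0) (Iab (x (k.1 - 1)) (x k.1)) :=
    fun k s hs =>
      (sum_indicator_apply_of_pairwise_disjoint (pairwise_disjoint_Iab hx) K g hs).trans
        (by split_ifs <;> rfl)
  have hfK : ∀ k ∈ K, hardyIntegral u q (x (k.1 - 1)) (x k.1) f =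
      hardyIntegral u q (x (k.1 - 1)) (x k.1) (g k) := fun k hk =>
    hardyIntegral_congr (by simpa [hk] using hfI k)
  have hfα : ∀ k : {k : ℤ // N < k}, weightedLpIntegral v p (x (k.1 - 1)) (x k.1) f ≤ α k.1 ^ p :=
    fun k => by
      rw [weightedLpIntegral_congr (hfI k)]
      split_ifs
      · exact hgα k
      · rw [weightedLpIntegral_zero hp]
        exact zero_le
  calc ∑ k ∈ K, (2 : ℝ≥0∞) ^ (-(k.1 : ℝ)) *
        hardyIntegral u q (x (k.1 - 1)) (x k.1) (g k) ^ (r / q)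
      = ∑ k ∈ K, (2 : ℝ≥0∞) ^ (-(k.1 : ℝ)) *
          hardyIntegral u q (x (k.1 - 1)) (x k.1) f ^ (r / q) :=
        Finset.sum_congr rfl fun k hk => by rw [hfK k hk]
    _ ≤ ∑' k : {k : ℤ // N < k}, (2 : ℝ≥0∞) ^ (-(k.1 : ℝ)) *
          hardyIntegral u q (x (k.1 - 1)) (x k.1) f ^ (r / q) := ENNReal.sum_le_tsum K
    _ ≤ (C * (∑' k : {k : ℤ // N < k}, weightedLpIntegral v p (x (k.1 - 1)) (x k.1) f) ^
          (1 / p)) ^ r := by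
        rw [← ENNReal.rpow_inv_le_iff hr, ← one_div]
        exact disc1_iff.1 hC f hf
    _ ≤ (C * (∑' k : {k : ℤ // N < k}, α k.1 ^ p) ^ (1 / p)) ^ r := by
        gcongr with k
        exact hfα k

lemma seqB_of_disc1 (hp : 0 < p) (hq : 0 < q) (hr : 0 < r) (hvm : Measurable v)
    (hv : ∀ k, N < k → ∀ s ∈ Iab (x (k - 1)) (x k), v s ≠ 0)
    (hx : ∀ k, N ≤ k → x k ≤ x (k + 1)) (hC : Disc1 u v p q r N x C) :
    SeqB u v p q r N x C := by
  intro aa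
  let G : {k : ℤ // N < k} → Type := fun k => {g : ℝ → ℝ≥0∞ //
    Measurable g ∧ weightedLpIntegral v p (x (k.1 - 1)) (x k.1) g ≤ (aa k.1 : ℝ≥0∞) ^ p}
  have : ∀ k, Nonempty (G k) := fun k =>
    ⟨⟨0, measurable_const, by rw [weightedLpIntegral_zero hp]; exact zero_le⟩⟩
  have hterm : ∀ k : {k : ℤ // N < k}, (2 : ℝ≥0∞) ^ (-(k.1 : ℝ)) * (aa k.1 : ℝ≥0∞) ^ r *
      Bconst u v p q (x (k.1 - 1)) (x k.1) ^ r ≤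
      ⨆ g : G k, (2 : ℝ≥0∞) ^ (-(k.1 : ℝ)) *
        hardyIntegral u q (x (k.1 - 1)) (x k.1) g.1 ^ (r / q) := by
    intro k
    rw [← ENNReal.mul_iSup, mul_assoc, ← mul_rpow_of_nonneg _ _ hr.le]
    gcongr
    calc ((aa k.1 : ℝ≥0∞) * Bconst u v p q (x (k.1 - 1)) (x k.1)) ^ r
        ≤ (⨆ g : G k, hardyIntegral u q (x (k.1 - 1)) (x k.1) g.1 ^ (1 / q)) ^ r := by
          gcongr
          exact mul_Bconst_le_iSup hp hq hvm (hv k.1 k.2) coe_ne_top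
      _ = ⨆ g : G k, hardyIntegral u q (x (k.1 - 1)) (x k.1) g.1 ^ (r / q) := by
          simp only [ENNReal.iSup_rpow _ hr, ← ENNReal.rpow_mul, one_div_mul_eq_div]
  rw [one_div r, ENNReal.rpow_inv_le_iff hr, ENNReal.tsum_eq_iSup_sum]
  refine iSup_le fun K => (Finset.sum_le_sum fun k _ => hterm k).trans ?_
  exact ENNReal.finsetSum_iSup_le fun H =>
    sum_hardyIntegral_le_of_disc1 hp hr hx hC (fun k => aa k) K (fun k => (H k).1)
      (fun k => (H k).2.1) fun k => (H k).2.2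

end Blocks

theorem statement16 (p q r : ℝ) (hp : 1 ≤ p) (hq : 0 < q) (hr : 0 < r) :
    ∃ c₁ c₂ : ℝ≥0∞, 0 < c₁ ∧ c₂ < ∞ ∧
      ∀ (a b : EReal), a < b →
      ∀ u v : ℝ → ℝ≥0∞, Measurable u → Measurable v →
        (∀ x ∈ Iab a b, 0 < u x ∧ u x < ∞) →
        (∀ x ∈ Iab a b, 0 < v x ∧ v x < ∞) →
      ∀ (N : ℤ) (x : ℤ → EReal),
        (∀ k, N ≤ k → x k < x (k + 1)) →
        (∀ k, N ≤ k → a ≤ x k ∧ x k ≤ b) →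
        (((∃ C' : ℝ≥0∞, 0 < C' ∧ C' < ∞ ∧ Disc1 u v p q r N x C') ↔
            (∃ C : ℝ≥0∞, 0 < C ∧ C < ∞ ∧ SeqB u v p q r N x C)) ∧
          c₁ * sInf {C | SeqB u v p q r N x C} ≤ sInf {C' | Disc1 u v p q r N x C'} ∧
          sInf {C' | Disc1 u v p q r N x C'} ≤ c₂ * sInf {C | SeqB u v p q r N x C}) := by
  refine ⟨1, 1, one_pos, one_lt_top, fun a b _ u v hu hvm _ hv N x hx hxab => ?_⟩
  have hp₀ : 0 < p := by linarith
  have hvk : ∀ k, N < k → ∀ s ∈ Iab (x (k - 1)) (x k), 0 < v s ∧ v s < ∞ :=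
    fun k hk s hs => hv s (Iab_subset_Iab (hxab (k - 1) (by omega)).1 (hxab k (by omega)).2 hs)
  have hiff : ∀ C, Disc1 u v p q r N x C ↔ SeqB u v p q r N x C := fun C =>
    ⟨seqB_of_disc1 hp₀ hq hr hvm (fun k hk s hs => (hvk k hk s hs).1.ne') fun k hk => (hx k hk).le,
      disc1_of_seqB hp₀ hq hr hu hvm hvk⟩
  simp only [hiff, one_mul, le_refl, and_self]
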